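/- arXiv:2404.03867 — 3 statements merged into one kernel-verified Lean document; each statement's English description precedes it below -/
import Mathlib

section
/- Assume R > 1. For an integer k ≥ 1, let Tail(k) = {x ∈ X : (P₀^lazy)^{k−1}(x, x*) = 0 and (P₀^lazy)^{k}(x, x*) > 0}, the set of states needing at least k steps of the lazy random-walk Metropolis–Hastings chain to reach x*. Then π(Tail(k)) ≤ (M/R)^k. -/
open Finset

noncomputable section

variable {X : Type*}

/-- Total variation distance between two (finitely supported) distributions. -/
def tvDist [Fintype X] (ζ μ : X → ℝ) : ℝ :=
  ⨆ A : Finset X, |∑ a ∈ A, ζ a - ∑ a ∈ A, μ a|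

/-- The lazy version `(P + I)/2` of a transition matrix. -/
def lazyM [Fintype X] [DecidableEq X] (P : Matrix X X ℝ) : Matrix X X ℝ :=
  (2 : ℝ)⁻¹ • (P + 1)

/-- Mixing time started from `x`. -/
def mixTimeFrom [Fintype X] [DecidableEq X] (P : Matrix X X ℝ) (μ : X → ℝ) (ε : ℝ) (x : X) : ℕ :=
  sInf {t : ℕ | tvDist (fun y => (P ^ t) x y) μ ≤ ε}

/-- Worst-case mixing time. -/
def mixTime [Fintype X] [DecidableEq X] (P : Matrix X X ℝ) (μ : X → ℝ) (ε : ℝ) : ℕ :=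
  Finset.univ.sup (mixTimeFrom P μ ε)

/-- Variational spectral gap of a reversible transition matrix. -/
def specGap [Fintype X] (P : Matrix X X ℝ) (μ : X → ℝ) : ℝ :=
  sInf { r : ℝ | ∃ f : X → ℝ,
    (2⁻¹ * ∑ x, ∑ y, (f x - f y) ^ 2 * μ x * μ y) ≠ 0 ∧
    r = (2⁻¹ * ∑ x, ∑ y, (f x - f y) ^ 2 * P x y * μ x) /
        (2⁻¹ * ∑ x, ∑ y, (f x - f y) ^ 2 * μ x * μ y) }

/-- Restricted spectral gap on `X0`. -/
def restGap [Fintype X] (P : Matrix X X ℝ) (μ : X → ℝ) (X0 : Finset X) : ℝ :=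
  sInf { r : ℝ | ∃ f : X → ℝ,
    0 < (∑ x ∈ X0, ∑ y ∈ X0, (f x - f y) ^ 2 * μ x * μ y) ∧
    r = (∑ x ∈ X0, ∑ y ∈ X0, (f x - f y) ^ 2 * P x y * μ x) /
        (∑ x ∈ X0, ∑ y ∈ X0, (f x - f y) ^ 2 * μ x * μ y) }

/-- `c(ρ) = 4 / (1 - ρ^{-1/2})³`. -/
def cFun (ρ : ℝ) : ℝ := 4 / (1 - ρ ^ (-(2 : ℝ)⁻¹)) ^ 3

/-- Maximum neighborhood size. -/
def Mmax [Fintype X] (N : X → Finset X) : ℕ := Finset.univ.sup fun x => (N x).card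

/-- Minimal value of `π`. -/
def piMin [Fintype X] [Nonempty X] (π : X → ℝ) : ℝ := ⨅ x, π x

/-- `R = min_{x ≠ x*} max_{y ∈ N(x)} π(y)/π(x)`. -/
def Rval [Fintype X] (π : X → ℝ) (N : X → Finset X) (xstar : X) : ℝ :=
  sInf ((fun x => sSup ((fun y => π y / π x) '' (N x : Set X))) '' {x | x ≠ xstar})

/-- Restricted `R|_{X₀}`. -/
def RvalRes [Fintype X] [DecidableEq X] (π : X → ℝ) (N : X → Finset X) (X0 : Finset X)
    (x0star : X) : ℝ :=
  sInf ((fun x => sSup ((fun y => π y / π x) '' ((N x ∩ X0 : Finset X) : Set X))) ''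
    {x | x ∈ X0 ∧ x ≠ x0star})

/-- Random walk Metropolis–Hastings transition matrix. -/
def rwMH [Fintype X] [DecidableEq X] (π : X → ℝ) (N : X → Finset X) : Matrix X X ℝ :=
  Matrix.of fun x y =>
    if y ∈ N x then min (((N x).card : ℝ))⁻¹ (π y / (π x * ((N y).card : ℝ)))
    else if y = x then
      1 - ∑ z ∈ N x, min (((N x).card : ℝ))⁻¹ (π z / (π x * ((N z).card : ℝ)))
    else 0

/-- The clipping function `clip(u, ℓ, L)`. -/
def clip (l L u : ℝ) : ℝ := if u < l then l else if u ≤ L then u else L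

/-- Normalizing constant of the informed proposal. -/
def Zh [Fintype X] (π : X → ℝ) (N : X → Finset X) (l L : ℝ) (x : X) : ℝ :=
  ∑ y ∈ N x, clip l L (π y / π x)

/-- Informed proposal kernel. -/
def Kh [Fintype X] [DecidableEq X] (π : X → ℝ) (N : X → Finset X) (l L : ℝ) (x y : X) : ℝ :=
  (if y ∈ N x then clip l L (π y / π x) else 0) / Zh π N l L x

/-- Informed Metropolis–Hastings transition matrix. -/
def infMH [Fintype X] [DecidableEq X] (π : X → ℝ) (N : X → Finset X) (l L : ℝ) :
    Matrix X X ℝ :=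
  Matrix.of fun x y =>
    if y = x then
      1 - ∑ z ∈ Finset.univ.erase x,
        Kh π N l L x z * min 1 ((π z * Kh π N l L z x) / (π x * Kh π N l L x z))
    else Kh π N l L x y * min 1 ((π y * Kh π N l L y x) / (π x * Kh π N l L x y))

/-- List of consecutive edges of a list of vertices. -/
def edgeList : List X → List (X × X)
  | a :: b :: rest => (a, b) :: edgeList (b :: rest)
  | _ => []

/-- `γ` is a path from `x` to `y` (x ≠ y) with all edges in `E` and no repeated edge. -/
def IsPathIn (E : Finset (X × X)) (x y : X) (γ : List X) : Prop :=
  x ≠ y ∧ γ.head? = some x ∧ γ.getLast? = some y ∧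
    (∀ e ∈ edgeList γ, e ∈ E) ∧ (edgeList γ).Nodup

/-- `Φ(x,y) = Σ_{γ ∈ Γ_E(x,y)} φ(γ)`. -/
def flowBetween (E : Finset (X × X)) (φ : List X → ℝ) (x y : X) : ℝ :=
  ∑' γ : {γ : List X // IsPathIn E x y γ}, φ γ

/-- Flow from `x` to `y` through the edge `e`. -/
def flowBetweenThrough (E : Finset (X × X)) (φ : List X → ℝ) (x y : X) (e : X × X) : ℝ :=
  ∑' γ : {γ : List X // IsPathIn E x y γ ∧ e ∈ edgeList γ}, φ γ

/-- `w`-length of a path. -/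
def wlen (w : X × X → ℝ) (γ : List X) : ℝ := ((edgeList γ).map w).sum

/-- Congestion `A(E, w, φ)`. -/
def congestion [Fintype X] (π : X → ℝ) (P : Matrix X X ℝ) (E : Finset (X × X))
    (w : X × X → ℝ) (φ : List X → ℝ) : ℝ :=
  ⨆ e ∈ E,
    (∑' γ : {γ : List X // (∃ x y, IsPathIn E x y γ) ∧ e ∈ edgeList γ}, wlen w γ * φ γ) /
      (π e.1 * P e.1 e.2 * w e)

/-- `N_S(x) = {x' ∈ N(x) : π(x')/π(x) ≥ S}`. -/
def NS [Fintype X] (π : X → ℝ) (N : X → Finset X) (S : ℝ) (x : X) : Finset X :=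
  (N x).filter fun y => S ≤ π y / π x

/-- Edge set `E_S`. -/
def ES [Fintype X] [DecidableEq X] (π : X → ℝ) (N : X → Finset X) (S : ℝ) : Finset (X × X) :=
  Finset.univ.filter fun e => e.1 ∈ NS π N S e.2 ∨ e.2 ∈ NS π N S e.1

/-- Restricted `N|^S_{X₀}(x)`. -/
def NSres [Fintype X] [DecidableEq X] (π : X → ℝ) (N : X → Finset X) (X0 : Finset X) (S : ℝ)
    (x : X) : Finset X :=
  ((N x) ∩ X0).filter fun y => S ≤ π y / π x

/-- Restricted edge set `E_S⁰`. -/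
def ESres [Fintype X] [DecidableEq X] (π : X → ℝ) (N : X → Finset X) (X0 : Finset X)
    (S : ℝ) : Finset (X × X) :=
  Finset.univ.filter fun e =>
    (e.1 ∈ X0 ∧ e.2 ∈ X0) ∧ (e.1 ∈ NSres π N X0 S e.2 ∨ e.2 ∈ NSres π N X0 S e.1)

end

section myaux

variable {X : Type*} [Fintype X] [DecidableEq X]

lemma my_rwMH_nonneg (π : X → ℝ) (hπ : ∀ x, 0 < π x) (N : X → Finset X) (x y : X) :
    0 ≤ rwMH π N x y := by
  unfold rwMH
  simp only [Matrix.of_apply]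
  split_ifs with h1 h2
  · refine le_min (by positivity) (div_nonneg (hπ y).le ?_)
    exact mul_nonneg (hπ x).le (Nat.cast_nonneg _)
  · rw [sub_nonneg]
    calc ∑ z ∈ N x, min (((N x).card : ℝ))⁻¹ (π z / (π x * ((N z).card : ℝ)))
        ≤ ∑ _z ∈ N x, (((N x).card : ℝ))⁻¹ :=
          Finset.sum_le_sum fun z _ => min_le_left _ _
      _ ≤ 1 := by
          rw [Finset.sum_const, nsmul_eq_mul]
          rcases Nat.eq_zero_or_pos (N x).card with h | h
          · simp [h]
          · rw [mul_inv_cancel₀ (by exact_mod_cast h.ne')]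
  · exact le_refl 0

lemma my_lazy_apply (P : Matrix X X ℝ) (x y : X) :
    lazyM P x y = 2⁻¹ * (P x y + if x = y then 1 else 0) := by
  simp [lazyM, Matrix.add_apply, Matrix.one_apply, smul_eq_mul]

lemma my_lazy_nonneg (π : X → ℝ) (hπ : ∀ x, 0 < π x) (N : X → Finset X) (x y : X) :
    0 ≤ lazyM (rwMH π N) x y := by
  rw [my_lazy_apply]
  have h1 := my_rwMH_nonneg π hπ N x y
  have h2 : (0:ℝ) ≤ if x = y then (1:ℝ) else 0 := by split_ifs <;> norm_num
  nlinarith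

lemma my_lazy_diag_pos (π : X → ℝ) (hπ : ∀ x, 0 < π x) (N : X → Finset X) (x : X) :
    0 < lazyM (rwMH π N) x x := by
  rw [my_lazy_apply]
  have h1 := my_rwMH_nonneg π hπ N x x
  rw [if_pos rfl]
  nlinarith

lemma my_lazy_pos_of_mem (π : X → ℝ) (hπ : ∀ x, 0 < π x) (N : X → Finset X)
    (hNsym : ∀ x y, y ∈ N x → x ∈ N y) {x y : X} (h : y ∈ N x) :
    0 < lazyM (rwMH π N) x y := by
  have hx : 0 < (N x).card := Finset.card_pos.mpr ⟨y, h⟩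
  have hy : 0 < (N y).card := Finset.card_pos.mpr ⟨x, hNsym x y h⟩
  rw [my_lazy_apply]
  have hmin : 0 < rwMH π N x y := by
    unfold rwMH
    simp only [Matrix.of_apply, if_pos h]
    refine lt_min (by positivity) (div_pos (hπ y) ?_)
    exact mul_pos (hπ x) (by exact_mod_cast hy)
  have h2 : (0:ℝ) ≤ if x = y then (1:ℝ) else 0 := by split_ifs <;> norm_num
  nlinarith

lemma my_lazy_eq_zero (π : X → ℝ) (N : X → Finset X) {x y : X}
    (h : y ∉ N x) (h2 : y ≠ x) : lazyM (rwMH π N) x y = 0 := by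
  rw [my_lazy_apply]
  unfold rwMH
  simp only [Matrix.of_apply, if_neg h, if_neg h2]
  simp [Ne.symm h2]

lemma my_pow_nonneg (π : X → ℝ) (hπ : ∀ x, 0 < π x) (N : X → Finset X) (n : ℕ) (x y : X) :
    0 ≤ (lazyM (rwMH π N) ^ n) x y := by
  induction n generalizing x y with
  | zero =>
    rw [pow_zero, Matrix.one_apply]
    split_ifs <;> norm_num
  | succ n ih =>
    rw [pow_succ', Matrix.mul_apply]
    exact Finset.sum_nonneg fun z _ => mul_nonneg (my_lazy_nonneg π hπ N x z) (ih z y)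

lemma my_step_pos (π : X → ℝ) (hπ : ∀ x, 0 < π x) (N : X → Finset X) (n : ℕ) {x y z : X}
    (h1 : 0 < lazyM (rwMH π N) x y) (h2 : 0 < (lazyM (rwMH π N) ^ n) y z) :
    0 < (lazyM (rwMH π N) ^ (n + 1)) x z := by
  rw [pow_succ', Matrix.mul_apply]
  refine Finset.sum_pos' (fun w _ => mul_nonneg (my_lazy_nonneg π hπ N x w)
    (my_pow_nonneg π hπ N n w z)) ⟨y, Finset.mem_univ y, mul_pos h1 h2⟩

lemma my_step_exists (π : X → ℝ) (hπ : ∀ x, 0 < π x) (N : X → Finset X) (n : ℕ) {x z : X}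
    (h : 0 < (lazyM (rwMH π N) ^ (n + 1)) x z) :
    ∃ y, 0 < lazyM (rwMH π N) x y ∧ 0 < (lazyM (rwMH π N) ^ n) y z := by
  rw [pow_succ', Matrix.mul_apply] at h
  by_contra hc
  push_neg at hc
  refine absurd h (not_lt.mpr (Finset.sum_nonpos fun y _ => ?_))
  have h1 := my_lazy_nonneg π hπ N x y
  have h2 := my_pow_nonneg π hπ N n y z
  rcases lt_or_eq_of_le h1 with h1' | h1'
  · have h3 := hc y h1'
    have h4 : (lazyM (rwMH π N) ^ n) y z = 0 := le_antisymm h3 h2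
    simp [h4]
  · simp [← h1']

lemma my_xstar_pos (π : X → ℝ) (hπ : ∀ x, 0 < π x) (N : X → Finset X) (n : ℕ) (xstar : X) :
    0 < (lazyM (rwMH π N) ^ n) xstar xstar := by
  induction n with
  | zero => rw [pow_zero, Matrix.one_apply_eq]; norm_num
  | succ n ih => exact my_step_pos π hπ N n (my_lazy_diag_pos π hπ N xstar) ih

lemma my_mono (π : X → ℝ) (hπ : ∀ x, 0 < π x) (N : X → Finset X) (n : ℕ) {x z : X}
    (h : 0 < (lazyM (rwMH π N) ^ n) x z) : 0 < (lazyM (rwMH π N) ^ (n + 1)) x z :=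
  my_step_pos π hπ N n (my_lazy_diag_pos π hπ N x) h

lemma my_greedy (π : X → ℝ) (hπ : ∀ x, 0 < π x) (N : X → Finset X) (xstar : X)
    (hR : 1 < Rval π N xstar) {x : X} (hx : x ≠ xstar) :
    ∃ y ∈ N x, Rval π N xstar * π x ≤ π y := by
  have hmem : sSup ((fun y => π y / π x) '' (N x : Set X)) ∈
      ((fun x => sSup ((fun y => π y / π x) '' (N x : Set X))) '' {x | x ≠ xstar}) :=
    ⟨x, hx, rfl⟩
  have hSfin : ((fun x => sSup ((fun y => π y / π x) '' (N x : Set X))) ''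
      {x | x ≠ xstar}).Finite := (Set.toFinite _).image _
  have hle : Rval π N xstar ≤ sSup ((fun y => π y / π x) '' (N x : Set X)) :=
    csInf_le hSfin.bddBelow hmem
  have hTfin : ((fun y => π y / π x) '' (N x : Set X)).Finite :=
    ((N x).finite_toSet).image _
  have hTne : ((fun y => π y / π x) '' (N x : Set X)).Nonempty := by
    by_contra hc
    rw [Set.not_nonempty_iff_eq_empty] at hc
    rw [hc, Real.sSup_empty] at hle
    linarith
  obtain ⟨y, hy, hyeq⟩ := hTne.csSup_mem hTfin
  refine ⟨y, hy, ?_⟩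
  have : Rval π N xstar ≤ π y / π x := by rw [← hyeq] at hle; exact hle
  exact (le_div_iff₀ (hπ x)).mp this

lemma my_far_bound (π : X → ℝ) (hπ : ∀ x, 0 < π x) (hπsum : ∑ x, π x = 1)
    (N : X → Finset X) (hNsym : ∀ x y, y ∈ N x → x ∈ N y) (xstar : X)
    (hR : 1 < Rval π N xstar) :
    ∀ n x, ¬ 0 < (lazyM (rwMH π N) ^ n) x xstar →
      π x * Rval π N xstar ^ (n + 1) ≤ 1 := by
  have hπle : ∀ y, π y ≤ 1 := by
    intro y
    rw [← hπsum]
    exact Finset.single_le_sum (fun z _ => (hπ z).le) (Finset.mem_univ y)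
  intro n
  induction n with
  | zero =>
    intro x hx
    have hxne : x ≠ xstar := by
      intro h
      rw [h] at hx
      exact hx (my_xstar_pos π hπ N 0 xstar)
    obtain ⟨y, hy, hle⟩ := my_greedy π hπ N xstar hR hxne
    rw [pow_one]
    calc π x * Rval π N xstar = Rval π N xstar * π x := mul_comm _ _
      _ ≤ π y := hle
      _ ≤ 1 := hπle y
  | succ n ih =>
    intro x hx
    have hxne : x ≠ xstar := by
      intro h
      rw [h] at hx
      exact hx (my_xstar_pos π hπ N (n + 1) xstar)
    obtain ⟨y, hy, hle⟩ := my_greedy π hπ N xstar hR hxne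
    have hyfar : ¬ 0 < (lazyM (rwMH π N) ^ n) y xstar := by
      intro hc
      exact hx (my_step_pos π hπ N n (my_lazy_pos_of_mem π hπ N hNsym hy) hc)
    have hIH := ih y hyfar
    have hRpos : (0 : ℝ) < Rval π N xstar := lt_trans one_pos hR
    have hpow : (0 : ℝ) ≤ Rval π N xstar ^ (n + 1) := (pow_pos hRpos _).le
    calc π x * Rval π N xstar ^ (n + 2)
        = (Rval π N xstar * π x) * Rval π N xstar ^ (n + 1) := by ring
      _ ≤ π y * Rval π N xstar ^ (n + 1) := mul_le_mul_of_nonneg_right hle hpow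
      _ ≤ 1 := hIH

lemma my_card_bound (π : X → ℝ) (hπ : ∀ x, 0 < π x) (N : X → Finset X)
    (hNsym : ∀ x y, y ∈ N x → x ∈ N y) (xstar : X) :
    ∀ n, (Finset.univ.filter fun x => ¬ 0 < (lazyM (rwMH π N) ^ n) x xstar ∧
        0 < (lazyM (rwMH π N) ^ (n + 1)) x xstar).card ≤ Mmax N ^ (n + 1) := by
  intro n
  induction n with
  | zero =>
    have hsub : (Finset.univ.filter fun x => ¬ 0 < (lazyM (rwMH π N) ^ 0) x xstar ∧
        0 < (lazyM (rwMH π N) ^ 1) x xstar) ⊆ N xstar := by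
      intro x hx
      rw [Finset.mem_filter] at hx
      obtain ⟨-, h0, h1⟩ := hx
      rw [pow_one] at h1
      have hxne : x ≠ xstar := by
        intro hh
        rw [hh] at h0
        exact h0 (my_xstar_pos π hπ N 0 xstar)
      by_contra hns
      have : xstar ∉ N x := fun hc => hns (hNsym x xstar hc)
      rw [my_lazy_eq_zero π N this (Ne.symm hxne)] at h1
      exact lt_irrefl 0 h1
    calc _ ≤ (N xstar).card := Finset.card_le_card hsub
      _ ≤ Mmax N ^ 1 := by rw [pow_one]; exact Finset.le_sup (f := fun z => (N z).card) (Finset.mem_univ xstar)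
  | succ n ih =>
    have hsub : (Finset.univ.filter fun x => ¬ 0 < (lazyM (rwMH π N) ^ (n + 1)) x xstar ∧
        0 < (lazyM (rwMH π N) ^ (n + 2)) x xstar) ⊆
        (Finset.univ.filter fun x => ¬ 0 < (lazyM (rwMH π N) ^ n) x xstar ∧
          0 < (lazyM (rwMH π N) ^ (n + 1)) x xstar).biUnion N := by
      intro x hx
      rw [Finset.mem_filter] at hx
      obtain ⟨-, h0, h1⟩ := hx
      obtain ⟨y, hPxy, hPy⟩ := my_step_exists π hπ N (n + 1) h1
      have hyne : y ≠ x := by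
        rintro rfl
        exact h0 hPy
      have hyN : y ∈ N x := by
        by_contra hc
        rw [my_lazy_eq_zero π N hc hyne] at hPxy
        exact lt_irrefl 0 hPxy
      have hyfar : ¬ 0 < (lazyM (rwMH π N) ^ n) y xstar := by
        intro hc
        exact h0 (my_step_pos π hπ N n hPxy hc)
      rw [Finset.mem_biUnion]
      exact ⟨y, Finset.mem_filter.mpr ⟨Finset.mem_univ y, hyfar, hPy⟩, hNsym x y hyN⟩
    calc _ ≤ _ := Finset.card_le_card hsub
      _ ≤ ∑ y ∈ (Finset.univ.filter fun x => ¬ 0 < (lazyM (rwMH π N) ^ n) x xstar ∧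
            0 < (lazyM (rwMH π N) ^ (n + 1)) x xstar), (N y).card :=
          Finset.card_biUnion_le
      _ ≤ ∑ _y ∈ (Finset.univ.filter fun x => ¬ 0 < (lazyM (rwMH π N) ^ n) x xstar ∧
            0 < (lazyM (rwMH π N) ^ (n + 1)) x xstar), Mmax N :=
          Finset.sum_le_sum fun y _ => Finset.le_sup (f := fun z => (N z).card) (Finset.mem_univ y)
      _ ≤ Mmax N ^ (n + 1) * Mmax N := by
          rw [Finset.sum_const, smul_eq_mul]
          exact Nat.mul_le_mul_right _ ih
      _ = Mmax N ^ (n + 2) := (pow_succ _ _).symm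

end myaux

theorem stmt16 {X : Type*} [Fintype X] [DecidableEq X] [Nonempty X]
    (π : X → ℝ) (hπpos : ∀ x, 0 < π x) (hπsum : ∑ x, π x = 1)
    (N : X → Finset X)
    (hNirr : ∀ x, x ∉ N x)
    (hNsym : ∀ x y, y ∈ N x → x ∈ N y)
    (hNconn : ∀ x y : X, Relation.ReflTransGen (fun a b => b ∈ N a) x y)
    (xstar : X) (hxstar : ∀ x, π x ≤ π xstar)
    (hR : 1 < Rval π N xstar)
    (k : ℕ) (hk : 1 ≤ k) :
    ∑ x ∈ Finset.univ.filter
        (fun x => (lazyM (rwMH π N) ^ (k - 1)) x xstar = 0 ∧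
          0 < (lazyM (rwMH π N) ^ k) x xstar), π x ≤
      ((Mmax N : ℝ) / Rval π N xstar) ^ k := by
  obtain ⟨m, rfl⟩ : ∃ m, k = m + 1 := ⟨k - 1, (Nat.succ_pred_eq_of_pos hk).symm⟩
  have hm : m + 1 - 1 = m := rfl
  rw [hm]
  set R := Rval π N xstar with hRdef
  have hRpos : (0 : ℝ) < R := lt_trans one_pos hR
  have hRk : (0 : ℝ) < R ^ (m + 1) := pow_pos hRpos _
  set T := Finset.univ.filter
      (fun x => (lazyM (rwMH π N) ^ m) x xstar = 0 ∧
        0 < (lazyM (rwMH π N) ^ (m + 1)) x xstar) with hT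
  have hTsub : T ⊆ Finset.univ.filter
      (fun x => ¬ 0 < (lazyM (rwMH π N) ^ m) x xstar ∧
        0 < (lazyM (rwMH π N) ^ (m + 1)) x xstar) := by
    intro x hx
    rw [hT, Finset.mem_filter] at hx
    exact Finset.mem_filter.mpr ⟨hx.1, by rw [hx.2.1]; exact lt_irrefl 0, hx.2.2⟩
  have hbound : ∀ x ∈ T, π x ≤ (R ^ (m + 1))⁻¹ := by
    intro x hx
    have hx' := Finset.mem_filter.mp (hTsub hx)
    have := my_far_bound π hπpos hπsum N hNsym xstar hR m x hx'.2.1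
    rw [← hRdef] at this
    calc π x = π x * R ^ (m + 1) * (R ^ (m + 1))⁻¹ := by field_simp
      _ ≤ 1 * (R ^ (m + 1))⁻¹ :=
          mul_le_mul_of_nonneg_right this (inv_nonneg.mpr hRk.le)
      _ = (R ^ (m + 1))⁻¹ := one_mul _
  have hcard : (T.card : ℝ) ≤ (Mmax N : ℝ) ^ (m + 1) := by
    have h1 : T.card ≤ Mmax N ^ (m + 1) :=
      le_trans (Finset.card_le_card hTsub) (my_card_bound π hπpos N hNsym xstar m)
    exact_mod_cast h1
  calc ∑ x ∈ T, π x ≤ ∑ _x ∈ T, (R ^ (m + 1))⁻¹ := Finset.sum_le_sum hbound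
    _ = (T.card : ℝ) * (R ^ (m + 1))⁻¹ := by rw [Finset.sum_const, nsmul_eq_mul]
    _ ≤ (Mmax N : ℝ) ^ (m + 1) * (R ^ (m + 1))⁻¹ :=
        mul_le_mul_of_nonneg_right hcard (inv_nonneg.mpr hRk.le)
    _ = ((Mmax N : ℝ) / R) ^ (m + 1) := by
        rw [div_pow, div_eq_mul_inv]
end

section
/- Let X₀ ⊆ X be such that ρ = R|_{X₀}/M > 1. Then the X₀-restricted spectral gap of the lazy random-walk Metropolis–Hastings chain satisfies Gap_{X₀}(P₀^lazy) ≥ 1/(c(ρ)·M). -/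
open Finset

/-!
Every `x ∈ X₀` other than the maximiser `x*` has a neighbour `g x ∈ X₀` with
`π (g x) ≥ R π x = ρ M π x`; with `g x* = x*`, iterating `g` climbs to `x*` within `|X₀|` steps.
Write `f x - f x*` as the telescoping sum along this path and apply Cauchy–Schwarz with weights
`r ^ i`, `r = ρ^(-1/2)`. The `i`-th increment is then weighted by `r^(-i)` times the `π`-mass of
`{x | g^[i] x = z}`; since at most `M` points are sent to any `z`, each lighter than `z` by the
factor `ρ M`, this mass is at most `ρ^(-i) π z = r^(2i) π z`, and two geometric series give
`Σ π x (f x - f x*)² ≤ (1 - r)^(-2) Σ π z (f (g z) - f z)²`. Each step `z ↦ g z` has lazy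
Metropolis–Hastings probability at least `1 / (2M)`, so the restricted gap is at least
`(1 - r)² / (4M) ≥ (1 - r)³ / (4M) = 1 / (c(ρ) M)`.
-/

theorem Finset.sum_sum_sub_sq_mul_mul_eq {ι : Type*} (s : Finset ι) (π u : ι → ℝ) :
    ∑ x ∈ s, ∑ y ∈ s, (u x - u y) ^ 2 * π x * π y
      = 2 * (∑ x ∈ s, π x) * ∑ x ∈ s, u x ^ 2 * π x - 2 * (∑ x ∈ s, u x * π x) ^ 2 := by
  have h : ∀ x y, (u x - u y) ^ 2 * π x * π y
      = u x ^ 2 * π x * π y + π x * (u y ^ 2 * π y) - 2 * (u x * π x) * (u y * π y) :=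
    fun x y => by ring
  simp only [h, sum_add_distrib, sum_sub_distrib, ← mul_sum, ← sum_mul, sq (∑ x ∈ s, u x * π x)]
  ring

theorem Finset.sum_sum_sub_sq_mul_mul_le {ι : Type*} (s : Finset ι) (π f : ι → ℝ) (a : ℝ) :
    ∑ x ∈ s, ∑ y ∈ s, (f x - f y) ^ 2 * π x * π y
      ≤ 2 * (∑ x ∈ s, π x) * ∑ x ∈ s, (f x - a) ^ 2 * π x := by
  have h := s.sum_sum_sub_sq_mul_mul_eq π (f · - a)
  simp only [sub_sub_sub_cancel_right] at h
  linarith [sq_nonneg (∑ x ∈ s, (f x - a) * π x)]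

theorem geom_sum_range_le_inv_one_sub {r : ℝ} (hr0 : 0 ≤ r) (hr1 : r < 1) (n : ℕ) :
    ∑ i ∈ range n, r ^ i ≤ (1 - r)⁻¹ := by
  have h := geom_sum_Ico_le_of_lt_one (m := 0) (n := n) hr0 hr1
  rwa [← Finset.range_eq_Ico, pow_zero, one_div] at h

theorem sq_sum_range_le_inv_one_sub_mul {r : ℝ} (hr0 : 0 < r) (hr1 : r < 1) (a : ℕ → ℝ)
    (n : ℕ) :
    (∑ i ∈ range n, a i) ^ 2 ≤ (1 - r)⁻¹ * ∑ i ∈ range n, a i ^ 2 / r ^ i :=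
  calc (∑ i ∈ range n, a i) ^ 2 ≤ (∑ i ∈ range n, r ^ i) * ∑ i ∈ range n, a i ^ 2 / r ^ i :=
        sum_sq_le_sum_mul_sum_of_sq_le_mul _ (fun i _ => by positivity)
          (fun i _ => by positivity) fun i _ => by rw [mul_div_cancel₀ _ (by positivity)]
    _ ≤ (1 - r)⁻¹ * ∑ i ∈ range n, a i ^ 2 / r ^ i := by
        gcongr
        exact geom_sum_range_le_inv_one_sub hr0.le hr1 n

section Ascent

variable {X : Type*} {s : Finset X} {g : X → X} {x₀ : X}

theorem iterate_card_eq_of_lt {α : Type*} [LinearOrder α] (π : X → α)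
    (hmaps : Set.MapsTo g s s) (hfix : g x₀ = x₀) (hlt : ∀ x ∈ s, x ≠ x₀ → π x < π (g x))
    {x : X} (hx : x ∈ s) : g^[#s] x = x₀ := by
  suffices H : ∀ n, ∀ x ∈ s, #{y ∈ s | π x < π y} ≤ n → g^[n] x = x₀ from
    H _ x hx (card_filter_le _ _)
  intro n
  induction n with
  | zero =>
    intro x hx hcard
    by_contra hne
    have hgx : g x ∈ {y ∈ s | π x < π y} := mem_filter.2 ⟨hmaps hx, hlt x hx hne⟩
    exact (card_pos.2 ⟨g x, hgx⟩).ne' (Nat.le_zero.1 hcard)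
  | succ n ih =>
    intro x hx hcard
    rcases eq_or_ne x x₀ with rfl | hne
    · exact Function.iterate_fixed hfix _
    have hgx := hlt x hx hne
    have hsub : {y ∈ s | π (g x) < π y} ⊂ {y ∈ s | π x < π y} :=
      (ssubset_iff_of_subset (monotone_filter_right s fun y _ => hgx.trans)).2
        ⟨g x, mem_filter.2 ⟨hmaps hx, hgx⟩, fun h => lt_irrefl _ (mem_filter.1 h).2⟩
    rw [Function.iterate_succ_apply]
    exact ih (g x) (hmaps hx) (Nat.lt_succ_iff.1 ((card_lt_card hsub).trans_le hcard))

variable {π : X → ℝ} {c : ℝ}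

theorem sum_mul_comp_le [DecidableEq X] (hmaps : Set.MapsTo g s s)
    (hpush : ∀ z ∈ s, z ≠ x₀ → ∑ w ∈ s with g w = z, π w ≤ c * π z)
    {h : X → ℝ} (hh : ∀ x ∈ s, 0 ≤ h x) (hh₀ : h x₀ = 0) :
    ∑ x ∈ s, π x * h (g x) ≤ c * ∑ x ∈ s, π x * h x :=
  calc ∑ x ∈ s, π x * h (g x) = ∑ z ∈ s, (∑ w ∈ s with g w = z, π w) * h z := by
        rw [← sum_fiberwise_of_maps_to hmaps]
        refine sum_congr rfl fun z _ => ?_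
        rw [sum_mul]
        exact sum_congr rfl fun w hw => by rw [(mem_filter.1 hw).2]
    _ ≤ ∑ z ∈ s, c * π z * h z := sum_le_sum fun z hz => by
        rcases eq_or_ne z x₀ with rfl | hz₀
        · simp [hh₀]
        · exact mul_le_mul_of_nonneg_right (hpush z hz hz₀) (hh z hz)
    _ = c * ∑ x ∈ s, π x * h x := by simp only [mul_sum, mul_assoc]

theorem sum_mul_comp_iterate_le [DecidableEq X] (hmaps : Set.MapsTo g s s) (hfix : g x₀ = x₀)
    (hpush : ∀ z ∈ s, z ≠ x₀ → ∑ w ∈ s with g w = z, π w ≤ c * π z) (hc : 0 ≤ c)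
    {h : X → ℝ} (hh : ∀ x ∈ s, 0 ≤ h x) (hh₀ : h x₀ = 0) (n : ℕ) :
    ∑ x ∈ s, π x * h (g^[n] x) ≤ c ^ n * ∑ x ∈ s, π x * h x := by
  induction n with
  | zero => simp
  | succ n ih =>
    calc ∑ x ∈ s, π x * h (g^[n + 1] x) = ∑ x ∈ s, π x * (h ∘ g^[n]) (g x) := by
          simp only [Function.iterate_succ_apply, Function.comp_apply]
      _ ≤ c * ∑ x ∈ s, π x * h (g^[n] x) :=
          sum_mul_comp_le hmaps hpush (fun x hx => hh _ (hmaps.iterate n hx))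
            (by simp [Function.iterate_fixed hfix, hh₀])
      _ ≤ c * (c ^ n * ∑ x ∈ s, π x * h x) := by gcongr
      _ = c ^ (n + 1) * ∑ x ∈ s, π x * h x := by ring

theorem sum_sub_sq_mul_le_of_ascent [DecidableEq X] {r : ℝ} (hr0 : 0 < r) (hr1 : r < 1)
    (hπ : ∀ x ∈ s, 0 ≤ π x) (hmaps : Set.MapsTo g s s) (hfix : g x₀ = x₀) {n : ℕ}
    (hhit : ∀ x ∈ s, g^[n] x = x₀)
    (hpush : ∀ z ∈ s, z ≠ x₀ → ∑ w ∈ s with g w = z, π w ≤ r ^ 2 * π z) (f : X → ℝ) :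
    ∑ x ∈ s, (f x - f x₀) ^ 2 * π x
      ≤ ((1 - r) ^ 2)⁻¹ * ∑ x ∈ s, π x * (f (g x) - f x) ^ 2 := by
  set h : X → ℝ := fun x => (f (g x) - f x) ^ 2
  have hpath : ∀ x ∈ s, (f x - f x₀) ^ 2 ≤ (1 - r)⁻¹ * ∑ i ∈ range n, h (g^[i] x) / r ^ i := by
    intro x hx
    have htel : f x₀ - f x = ∑ i ∈ range n, (f (g (g^[i] x)) - f (g^[i] x)) := by
      simp only [← Function.iterate_succ_apply' g]
      rw [sum_range_sub (fun i => f (g^[i] x)), hhit x hx, Function.iterate_zero_apply]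
    rw [← neg_sub, neg_sq, htel]
    exact sq_sum_range_le_inv_one_sub_mul hr0 hr1 _ n
  calc ∑ x ∈ s, (f x - f x₀) ^ 2 * π x
      ≤ ∑ x ∈ s, ((1 - r)⁻¹ * ∑ i ∈ range n, h (g^[i] x) / r ^ i) * π x :=
        sum_le_sum fun x hx => mul_le_mul_of_nonneg_right (hpath x hx) (hπ x hx)
    _ = (1 - r)⁻¹ * ∑ i ∈ range n, (r ^ i)⁻¹ * ∑ x ∈ s, π x * h (g^[i] x) := by
        simp only [mul_sum, sum_mul]
        rw [sum_comm]
        exact sum_congr rfl fun i _ => sum_congr rfl fun x _ => by ring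
    _ ≤ (1 - r)⁻¹ * ∑ i ∈ range n, (r ^ i)⁻¹ * ((r ^ 2) ^ i * ∑ x ∈ s, π x * h x) := by
        gcongr with i
        exact sum_mul_comp_iterate_le hmaps hfix hpush (by positivity)
          (h := h) (fun x _ => sq_nonneg _) (by simp [h, hfix]) i
    _ = (1 - r)⁻¹ * (∑ i ∈ range n, r ^ i) * ∑ x ∈ s, π x * h x := by
        rw [mul_assoc, sum_mul]
        congr 1
        refine sum_congr rfl fun i _ => ?_
        rw [← pow_mul, pow_mul', sq]
        field_simp
    _ ≤ (1 - r)⁻¹ * (1 - r)⁻¹ * ∑ x ∈ s, π x * h x := by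
        have hQ : 0 ≤ ∑ x ∈ s, π x * h x :=
          sum_nonneg fun x hx => mul_nonneg (hπ x hx) (sq_nonneg _)
        gcongr
        exact geom_sum_range_le_inv_one_sub hr0.le hr1 n
    _ = ((1 - r) ^ 2)⁻¹ * ∑ x ∈ s, π x * (f (g x) - f x) ^ 2 := by rw [sq, mul_inv]

theorem mul_sum_le_sum_sum_of_le_apply {P : Matrix X X ℝ} (hP : ∀ x y, 0 ≤ P x y)
    (hπ : ∀ x ∈ s, 0 ≤ π x) (hmaps : Set.MapsTo g s s) (hfix : g x₀ = x₀) {δ : ℝ}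
    (hstep : ∀ z ∈ s, z ≠ x₀ → δ ≤ P z (g z)) (f : X → ℝ) :
    δ * ∑ z ∈ s, π z * (f (g z) - f z) ^ 2
      ≤ ∑ x ∈ s, ∑ y ∈ s, (f x - f y) ^ 2 * P x y * π x := by
  rw [mul_sum]
  refine sum_le_sum fun z hz => ?_
  have hterm : ∀ y ∈ s, 0 ≤ (f z - f y) ^ 2 * P z y * π z := fun y _ =>
    mul_nonneg (mul_nonneg (sq_nonneg _) (hP z y)) (hπ z hz)
  rcases eq_or_ne z x₀ with rfl | hz₀
  · simpa [hfix] using sum_nonneg hterm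
  calc δ * (π z * (f (g z) - f z) ^ 2) = (f z - f (g z)) ^ 2 * δ * π z := by ring
    _ ≤ (f z - f (g z)) ^ 2 * P z (g z) * π z := by
        gcongr
        · exact hπ z hz
        · exact hstep z hz hz₀
    _ ≤ ∑ y ∈ s, (f z - f y) ^ 2 * P z y * π z := single_le_sum hterm (hmaps hz)

theorem sum_sum_sub_sq_mul_mul_le_of_ascent [DecidableEq X] {r : ℝ} (hr0 : 0 < r) (hr1 : r < 1)
    (hπ : ∀ x ∈ s, 0 ≤ π x) {m : ℝ} (hm : ∑ x ∈ s, π x ≤ m) (hmaps : Set.MapsTo g s s)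
    (hfix : g x₀ = x₀) {n : ℕ} (hhit : ∀ x ∈ s, g^[n] x = x₀)
    (hpush : ∀ z ∈ s, z ≠ x₀ → ∑ w ∈ s with g w = z, π w ≤ r ^ 2 * π z)
    {P : Matrix X X ℝ} (hP : ∀ x y, 0 ≤ P x y) {δ : ℝ} (hδ : 0 < δ)
    (hstep : ∀ z ∈ s, z ≠ x₀ → δ ≤ P z (g z)) (f : X → ℝ) :
    ∑ x ∈ s, ∑ y ∈ s, (f x - f y) ^ 2 * π x * π y
      ≤ 2 * m / (δ * (1 - r) ^ 2) * ∑ x ∈ s, ∑ y ∈ s, (f x - f y) ^ 2 * P x y * π x := by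
  have hm0 : 0 ≤ m := (sum_nonneg hπ).trans hm
  have hS0 : 0 ≤ ∑ x ∈ s, (f x - f x₀) ^ 2 * π x :=
    sum_nonneg fun x hx => mul_nonneg (sq_nonneg _) (hπ x hx)
  calc ∑ x ∈ s, ∑ y ∈ s, (f x - f y) ^ 2 * π x * π y
      ≤ 2 * (∑ x ∈ s, π x) * ∑ x ∈ s, (f x - f x₀) ^ 2 * π x :=
        s.sum_sum_sub_sq_mul_mul_le π f (f x₀)
    _ ≤ 2 * m * (((1 - r) ^ 2)⁻¹ * ∑ x ∈ s, π x * (f (g x) - f x) ^ 2) := by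
        gcongr
        exact sum_sub_sq_mul_le_of_ascent hr0 hr1 hπ hmaps hfix hhit hpush f
    _ = 2 * m / (δ * (1 - r) ^ 2) * (δ * ∑ x ∈ s, π x * (f (g x) - f x) ^ 2) := by
        field_simp
    _ ≤ _ := by
        gcongr
        exact mul_sum_le_sum_sum_of_le_apply hP hπ hmaps hfix hstep f

end Ascent

section MetropolisHastings

variable {X : Type*} [Fintype X]

theorem inv_le_restGap {P : Matrix X X ℝ} {π : X → ℝ} {X0 : Finset X} (hπ : ∀ x, 0 < π x)
    {a b : X} (ha : a ∈ X0) (hb : b ∈ X0) (hab : a ≠ b) {C : ℝ} (hC : 0 < C)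
    (h : ∀ f : X → ℝ, ∑ x ∈ X0, ∑ y ∈ X0, (f x - f y) ^ 2 * π x * π y
      ≤ C * ∑ x ∈ X0, ∑ y ∈ X0, (f x - f y) ^ 2 * P x y * π x) :
    C⁻¹ ≤ restGap P π X0 := by
  classical
  apply le_csInf
  · set f : X → ℝ := fun y => if y = a then 1 else 0
    have hterm : ∀ x y, 0 ≤ (f x - f y) ^ 2 * π x * π y := fun x y =>
      mul_nonneg (mul_nonneg (sq_nonneg _) (hπ x).le) (hπ y).le
    refine ⟨_, f, ?_, rfl⟩
    refine sum_pos' (fun x _ => sum_nonneg fun y _ => hterm x y) ⟨a, ha, ?_⟩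
    refine sum_pos' (fun y _ => hterm a y) ⟨b, hb, ?_⟩
    simpa [f, hab.symm] using mul_pos (hπ a) (hπ b)
  · rintro _ ⟨f, hV, rfl⟩
    rw [le_div_iff₀ hV, inv_mul_le_iff₀ hC]
    exact h f

theorem card_le_Mmax (N : X → Finset X) (x : X) : #(N x) ≤ Mmax N :=
  le_sup (f := fun x => #(N x)) (mem_univ x)

variable [DecidableEq X] {π : X → ℝ} {N : X → Finset X}

theorem rwMH_nonneg (hπ : ∀ x, 0 ≤ π x) (x y : X) : 0 ≤ rwMH π N x y := by
  rw [rwMH, Matrix.of_apply]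
  split_ifs
  · exact le_min (by positivity) (div_nonneg (hπ y) (mul_nonneg (hπ x) (Nat.cast_nonneg _)))
  · have hsum : ∑ z ∈ N x, min (#(N x) : ℝ)⁻¹ (π z / (π x * #(N z))) ≤ 1 :=
      calc _ ≤ ∑ _z ∈ N x, (#(N x) : ℝ)⁻¹ := sum_le_sum fun z _ => min_le_left _ _
        _ = #(N x) * (#(N x) : ℝ)⁻¹ := by rw [sum_const, nsmul_eq_mul]
        _ ≤ 1 := mul_inv_le_one
    linarith
  · exact le_rfl

theorem inv_Mmax_le_rwMH {x y : X} (hπx : 0 < π x) (hy : y ∈ N x) (hx : x ∈ N y)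
    (hxy : π x ≤ π y) : (Mmax N : ℝ)⁻¹ ≤ rwMH π N x y := by
  have hNx : (0 : ℝ) < #(N x) := Nat.cast_pos.2 (card_pos.2 ⟨y, hy⟩)
  have hNy : (0 : ℝ) < #(N y) := Nat.cast_pos.2 (card_pos.2 ⟨x, hx⟩)
  rw [rwMH, Matrix.of_apply, if_pos hy]
  refine le_min (inv_anti₀ hNx (by exact_mod_cast card_le_Mmax N x)) ?_
  calc (Mmax N : ℝ)⁻¹ ≤ (#(N y) : ℝ)⁻¹ := inv_anti₀ hNy (by exact_mod_cast card_le_Mmax N y)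
    _ = π x / (π x * #(N y)) := by field_simp
    _ ≤ π y / (π x * #(N y)) := by gcongr

theorem half_le_lazyM (P : Matrix X X ℝ) (x y : X) : P x y / 2 ≤ lazyM P x y := by
  rw [lazyM, Matrix.smul_apply, Matrix.add_apply, Matrix.one_apply, smul_eq_mul]
  split_ifs <;> linarith

theorem lazyM_nonneg {P : Matrix X X ℝ} (hP : ∀ x y, 0 ≤ P x y) (x y : X) :
    0 ≤ lazyM P x y :=
  (div_nonneg (hP x y) two_pos.le).trans (half_le_lazyM P x y)

theorem inv_two_mul_Mmax_le_lazyM_rwMH {x y : X} (hπx : 0 < π x) (hy : y ∈ N x)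
    (hx : x ∈ N y) (hxy : π x ≤ π y) : (2 * Mmax N : ℝ)⁻¹ ≤ lazyM (rwMH π N) x y :=
  calc (2 * Mmax N : ℝ)⁻¹ = (Mmax N : ℝ)⁻¹ / 2 := by ring
    _ ≤ rwMH π N x y / 2 := by gcongr; exact inv_Mmax_le_rwMH hπx hy hx hxy
    _ ≤ lazyM (rwMH π N) x y := half_le_lazyM _ x y

theorem exists_ne_of_RvalRes_pos {X0 : Finset X} {x₀ : X} (h : 0 < RvalRes π N X0 x₀) :
    ∃ x ∈ X0, x ≠ x₀ := by
  by_contra! hX0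
  have hempty : {x | x ∈ X0 ∧ x ≠ x₀} = ∅ :=
    Set.eq_empty_iff_forall_notMem.2 fun x hx => hx.2 (hX0 x hx.1)
  simp [RvalRes, hempty] at h

theorem exists_mem_mul_le_of_RvalRes_pos (hπ : ∀ x, 0 < π x) {X0 : Finset X} {x₀ : X}
    (h : 0 < RvalRes π N X0 x₀) {x : X} (hx : x ∈ X0) (hne : x ≠ x₀) :
    ∃ y ∈ N x ∩ X0, RvalRes π N X0 x₀ * π x ≤ π y := by
  set J := (fun y => π y / π x) '' ((N x ∩ X0 : Finset X) : Set X)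
  have hle : RvalRes π N X0 x₀ ≤ sSup J :=
    csInf_le (Set.toFinite _).bddBelow ⟨x, ⟨hx, hne⟩, rfl⟩
  have hJ : J.Nonempty := by
    by_contra hJ
    rw [Set.not_nonempty_iff_eq_empty.1 hJ, Real.sSup_empty] at hle
    linarith
  obtain ⟨y, hy, hyJ⟩ := hJ.csSup_mem ((finite_toSet _).image _)
  have hyJ : π y / π x = sSup J := hyJ
  refine ⟨y, hy, ?_⟩
  rw [← le_div_iff₀ (hπ x), hyJ]
  exact hle

theorem exists_ascent_of_RvalRes_pos (hπ : ∀ x, 0 < π x) {X0 : Finset X} {x₀ : X}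
    (h : 0 < RvalRes π N X0 x₀) :
    ∃ g : X → X, g x₀ = x₀ ∧
      ∀ x ∈ X0, x ≠ x₀ → g x ∈ N x ∧ g x ∈ X0 ∧ RvalRes π N X0 x₀ * π x ≤ π (g x) := by
  choose! g hg using fun x hx hne => exists_mem_mul_le_of_RvalRes_pos hπ h (x := x) hx hne
  refine ⟨Function.update g x₀ x₀, by simp, fun x hx hne => ?_⟩
  simpa [Function.update_of_ne hne, and_assoc] using hg x hx hne

theorem sum_filter_eq_le_of_ascent (hNsym : ∀ x y, y ∈ N x → x ∈ N y) {X0 : Finset X}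
    {g : X → X} {x₀ : X} (hfix : g x₀ = x₀) (hgN : ∀ x ∈ X0, x ≠ x₀ → g x ∈ N x)
    {κ : ℝ} (hκ : 0 < κ) (hgκ : ∀ x ∈ X0, x ≠ x₀ → κ * π x ≤ π (g x))
    {z : X} (hπz : 0 ≤ π z) (hz : z ≠ x₀) :
    ∑ w ∈ X0 with g w = z, π w ≤ Mmax N / κ * π z := by
  have hne : ∀ w ∈ X0, g w = z → w ≠ x₀ := by
    rintro w - hw rfl
    exact hz (by rw [← hw, hfix])
  have hsub : {w ∈ X0 | g w = z} ⊆ N z := fun w hw => by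
    obtain ⟨hw, hgw⟩ := mem_filter.1 hw
    exact hNsym _ _ (hgw ▸ hgN w hw (hne w hw hgw))
  calc ∑ w ∈ X0 with g w = z, π w ≤ ∑ w ∈ X0 with g w = z, π z / κ :=
        sum_le_sum fun w hw => by
          obtain ⟨hw, hgw⟩ := mem_filter.1 hw
          rw [le_div_iff₀' hκ, ← hgw]
          exact hgκ w hw (hne w hw hgw)
    _ = #{w ∈ X0 | g w = z} * (π z / κ) := by rw [sum_const, nsmul_eq_mul]
    _ ≤ Mmax N * (π z / κ) := by
        gcongr
        exact_mod_cast (card_le_card hsub).trans (card_le_Mmax N z)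
    _ = Mmax N / κ * π z := by ring

theorem sum_sum_sub_sq_mul_mul_le_lazy_rwMH (hπ : ∀ x, 0 < π x) {X0 : Finset X}
    (hmass : ∑ x ∈ X0, π x ≤ 1) (hNsym : ∀ x y, y ∈ N x → x ∈ N y) {x₀ : X} (hx₀ : x₀ ∈ X0)
    (hR : 1 < RvalRes π N X0 x₀) {r : ℝ} (hr0 : 0 < r) (hr1 : r < 1)
    (hr2 : r ^ 2 = Mmax N / RvalRes π N X0 x₀) (f : X → ℝ) :
    ∑ x ∈ X0, ∑ y ∈ X0, (f x - f y) ^ 2 * π x * π y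
      ≤ 4 * Mmax N / (1 - r) ^ 2
        * ∑ x ∈ X0, ∑ y ∈ X0, (f x - f y) ^ 2 * lazyM (rwMH π N) x y * π x := by
  have hM : (0 : ℝ) < Mmax N :=
    (div_pos_iff_of_pos_right (by linarith)).1 (hr2 ▸ pow_pos hr0 2)
  obtain ⟨g, hfix, hg⟩ := exists_ascent_of_RvalRes_pos hπ (by linarith : 0 < RvalRes π N X0 x₀)
  have hmaps : Set.MapsTo g X0 X0 := fun x hx => by
    rcases eq_or_ne x x₀ with rfl | hne
    · rwa [hfix]
    · exact (hg x hx hne).2.1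
  have hgrow : ∀ x ∈ X0, x ≠ x₀ → π x < π (g x) := fun x hx hne =>
    (lt_mul_of_one_lt_left (hπ x) hR).trans_le (hg x hx hne).2.2
  have hpush : ∀ z ∈ X0, z ≠ x₀ → ∑ w ∈ X0 with g w = z, π w ≤ r ^ 2 * π z :=
    fun z _ hz => hr2 ▸ sum_filter_eq_le_of_ascent hNsym hfix (fun x hx hne => (hg x hx hne).1)
      (by linarith) (fun x hx hne => (hg x hx hne).2.2) (hπ z).le hz
  have hstep : ∀ z ∈ X0, z ≠ x₀ → (2 * Mmax N : ℝ)⁻¹ ≤ lazyM (rwMH π N) z (g z) :=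
    fun z hz hne => inv_two_mul_Mmax_le_lazyM_rwMH (hπ z) (hg z hz hne).1
      (hNsym _ _ (hg z hz hne).1) (hgrow z hz hne).le
  refine (sum_sum_sub_sq_mul_mul_le_of_ascent hr0 hr1 (fun x _ => (hπ x).le) hmass hmaps hfix
    (fun x hx => iterate_card_eq_of_lt π hmaps hfix hgrow hx) hpush
    (lazyM_nonneg (rwMH_nonneg fun x => (hπ x).le)) (by positivity) hstep f).trans_eq ?_
  field_simp
  ring

end MetropolisHastings

theorem stmt18_general {X : Type*} [Fintype X] [DecidableEq X]
    (π : X → ℝ) (hπpos : ∀ x, 0 < π x) (hπsum : ∑ x, π x = 1)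
    (N : X → Finset X)
    (hNsym : ∀ x y, y ∈ N x → x ∈ N y)
    (X0 : Finset X)
    (x0star : X) (hx0star : x0star ∈ X0)
    (ρ : ℝ) (hρdef : ρ = RvalRes π N X0 x0star / (Mmax N : ℝ)) (hρ : 1 < ρ) :
    1 / (cFun ρ * (Mmax N : ℝ)) ≤ restGap (lazyM (rwMH π N)) π X0 := by
  set M : ℝ := (Mmax N : ℝ)
  set R := RvalRes π N X0 x0star
  have hM : 1 ≤ M := Nat.one_le_cast.2 <| Nat.pos_of_ne_zero fun h => by
    norm_num [hρdef, M, h] at hρ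
  have hR : R = ρ * M := by rw [hρdef, div_mul_cancel₀ _ (by positivity)]
  set r := ρ ^ (-(2 : ℝ)⁻¹)
  have hr0 : 0 < r := by positivity
  have hr1 : r < 1 := Real.rpow_lt_one_of_one_lt_of_neg hρ (by norm_num)
  have hr2 : r ^ 2 = M / R := by
    rw [hR, ← Real.rpow_natCast, ← Real.rpow_mul (by positivity)]
    norm_num [Real.rpow_neg_one]
    field_simp
  have hR1 : 1 < R := hR ▸ one_lt_mul_of_lt_of_le hρ hM
  obtain ⟨a, ha, hne⟩ := exists_ne_of_RvalRes_pos (by linarith : 0 < R)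
  have hmass : ∑ x ∈ X0, π x ≤ 1 := hπsum ▸ sum_le_univ_sum_of_nonneg fun x => (hπpos x).le
  have hr : 0 < 1 - r := sub_pos.2 hr1
  calc 1 / (cFun ρ * M) = (1 - r) ^ 3 / (4 * M) := by
        rw [show cFun ρ = 4 / (1 - r) ^ 3 from rfl]
        field_simp
    _ ≤ (1 - r) ^ 2 / (4 * M) := by
        gcongr ?_ / _
        exact pow_le_pow_of_le_one hr.le (by linarith) (by norm_num)
    _ = (4 * M / (1 - r) ^ 2)⁻¹ := by rw [inv_div]
    _ ≤ restGap (lazyM (rwMH π N)) π X0 := inv_le_restGap hπpos ha hx0star hne (by positivity)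
        (sum_sum_sub_sq_mul_mul_le_lazy_rwMH hπpos hmass hNsym hx0star hR1 hr0 hr1 hr2)

theorem stmt18 {X : Type*} [Fintype X] [DecidableEq X] [Nonempty X]
    (π : X → ℝ) (hπpos : ∀ x, 0 < π x) (hπsum : ∑ x, π x = 1)
    (N : X → Finset X)
    (hNirr : ∀ x, x ∉ N x)
    (hNsym : ∀ x y, y ∈ N x → x ∈ N y)
    (hNconn : ∀ x y : X, Relation.ReflTransGen (fun a b => b ∈ N a) x y)
    (X0 : Finset X)
    (x0star : X) (hx0star : x0star ∈ X0) (hx0max : ∀ x ∈ X0, π x ≤ π x0star)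
    (ρ : ℝ) (hρdef : ρ = RvalRes π N X0 x0star / (Mmax N : ℝ)) (hρ : 1 < ρ) :
    1 / (cFun ρ * (Mmax N : ℝ)) ≤ restGap (lazyM (rwMH π N)) π X0 :=
  stmt18_general π hπpos hπsum N hNsym X0 x0star hx0star ρ hρdef hρ
end

section
/- Let X₀ ⊆ X be such that R|_{X₀} > M², choose ℓ = M and M² < L ≤ R|_{X₀}, and assume the boundary condition max_{x∈X₀} max_{x'∈N(x)∖X₀} π(x')/π(x) < L/M. Then the X₀-restricted spectral gap of the lazy informed Metropolis–Hastings chain satisfies Gap_{X₀}(P_h^lazy) ≥ 1/(2·c(L/M²)). -/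
open Finset

set_option maxHeartbeats 3200000 in
theorem stmt19 {X : Type*} [Fintype X] [DecidableEq X] [Nonempty X]
    (π : X → ℝ) (hπpos : ∀ x, 0 < π x) (hπsum : ∑ x, π x = 1)
    (N : X → Finset X)
    (hNirr : ∀ x, x ∉ N x)
    (hNsym : ∀ x y, y ∈ N x → x ∈ N y)
    (hNconn : ∀ x y : X, Relation.ReflTransGen (fun a b => b ∈ N a) x y)
    (X0 : Finset X)
    (x0star : X) (hx0star : x0star ∈ X0) (hx0max : ∀ x ∈ X0, π x ≤ π x0star)
    (hRM : ((Mmax N : ℝ)) ^ 2 < RvalRes π N X0 x0star)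
    (L : ℝ) (hL1 : ((Mmax N : ℝ)) ^ 2 < L) (hL2 : L ≤ RvalRes π N X0 x0star)
    (hbd : ∀ x ∈ X0, ∀ x' ∈ N x, x' ∉ X0 → π x' / π x < L / (Mmax N : ℝ)) :
    1 / (2 * cFun (L / ((Mmax N : ℝ)) ^ 2)) ≤
      restGap (lazyM (infMH π N (Mmax N) L)) π X0 := by
    classical
  by_cases hne : ∃ x₁, x₁ ∈ X0 ∧ x₁ ≠ x0star
  case neg =>
    exfalso
    have h0 : {x : X | x ∈ X0 ∧ x ≠ x0star} = (∅ : Set X) := by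
      ext x
      simp only [Set.mem_setOf_eq, Set.mem_empty_iff_false, iff_false, not_and]
      intro hx hxne
      exact hne ⟨x, hx, hxne⟩
    rw [RvalRes, h0, Set.image_empty, Real.sInf_empty] at hRM
    nlinarith [sq_nonneg ((Mmax N : ℝ))]
  case pos =>
  obtain ⟨x₁, hx₁X0, hx₁ne⟩ := hne
  set Mr : ℝ := ((Mmax N : ℝ)) with hMrdef
  have hL0 : (0:ℝ) < L := lt_of_le_of_lt (sq_nonneg Mr) hL1
  -- every non-mode point of X0 has an uphill neighbor in X0 with ratio ≥ L
  have hup : ∀ x, x ∈ X0 → x ≠ x0star → ∃ y, y ∈ N x ∩ X0 ∧ L ≤ π y / π x := by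
    intro x hx hxne
    have hmem : sSup ((fun y => π y / π x) '' ((N x ∩ X0 : Finset X) : Set X)) ∈
        ((fun x => sSup ((fun y => π y / π x) '' ((N x ∩ X0 : Finset X) : Set X))) ''
          {x | x ∈ X0 ∧ x ≠ x0star}) := ⟨x, ⟨hx, hxne⟩, rfl⟩
    have hbdd : BddBelow ((fun x => sSup ((fun y => π y / π x) ''
        ((N x ∩ X0 : Finset X) : Set X))) '' {x | x ∈ X0 ∧ x ≠ x0star}) :=
      (Set.toFinite _).bddBelow
    have hLe : L ≤ sSup ((fun y => π y / π x) '' ((N x ∩ X0 : Finset X) : Set X)) :=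
      le_trans hL2 (csInf_le hbdd hmem)
    set S := ((fun y => π y / π x) '' ((N x ∩ X0 : Finset X) : Set X)) with hS
    have hSne : S.Nonempty := by
      by_contra hc
      rw [Set.not_nonempty_iff_eq_empty] at hc
      rw [hc, Real.sSup_empty] at hLe
      linarith
    have hmem2 : sSup S ∈ S := Set.Nonempty.csSup_mem hSne (Set.toFinite S)
    obtain ⟨y, hy, hyval⟩ := hmem2
    have hyval' : π y / π x = sSup S := hyval
    exact ⟨y, by exact_mod_cast hy, le_trans hLe hyval'.ge⟩
  have hcard : ∀ y, ((N y).card : ℝ) ≤ Mr := by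
    intro y
    have h2 : (N y).card ≤ Mmax N := by
      unfold Mmax
      exact Finset.le_sup (f := fun x => (N x).card) (Finset.mem_univ y)
    rw [hMrdef]
    exact_mod_cast h2
  have hM1 : (1:ℝ) ≤ Mr := by
    obtain ⟨y, hy, -⟩ := hup x₁ hx₁X0 hx₁ne
    have hyN : y ∈ N x₁ := (Finset.mem_inter.1 hy).1
    have h1 : 1 ≤ (N x₁).card := Finset.card_pos.2 ⟨y, hyN⟩
    calc (1:ℝ) ≤ ((N x₁).card : ℝ) := by exact_mod_cast h1
      _ ≤ Mr := hcard x₁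
  have hMr0 : (0:ℝ) < Mr := lt_of_lt_of_le one_pos hM1
  have hMrL : Mr ≤ L := by nlinarith
  have hL1' : (1:ℝ) < L := by nlinarith
  set s : ℝ := Real.sqrt L with hsdef
  have hs0 : 0 < s := Real.sqrt_pos.2 hL0
  have hsq : s^2 = L := Real.sq_sqrt hL0.le
  have hMs : Mr < s := by
    rw [hsdef]
    exact (Real.lt_sqrt hMr0.le).2 hL1
  set r : ℝ := Mr / s with hrdef
  have hr0 : 0 < r := div_pos hMr0 hs0
  have hr1 : r < 1 := (div_lt_one hs0).2 hMs
  have h1r : 0 < 1 - r := by linarith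
  have hrs : 1/s ≤ r := by
    rw [hrdef]
    gcongr
  -- clip lemmas
  have hclip_nn : ∀ u:ℝ, 0 ≤ u → 0 ≤ clip Mr L u := by
    intro u hu; unfold clip; split_ifs <;> linarith
  have hclip_leL : ∀ u:ℝ, clip Mr L u ≤ L := by
    intro u; unfold clip; split_ifs <;> linarith
  have hclip_geM : ∀ u:ℝ, Mr ≤ clip Mr L u := by
    intro u; unfold clip; split_ifs <;> linarith
  have hclip_leu : ∀ u:ℝ, Mr ≤ u → clip Mr L u ≤ u := by
    intro u hu; unfold clip; split_ifs <;> linarith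
  have hclip_eqL : ∀ u:ℝ, L ≤ u → clip Mr L u = L := by
    intro u hu; unfold clip; split_ifs <;> linarith
  have hclip_lemax : ∀ u:ℝ, clip Mr L u ≤ max Mr u := by
    intro u; unfold clip; split_ifs with h1 h2
    · exact le_max_left _ _
    · exact le_max_right _ _
    · exact le_trans (not_le.1 h2).le (le_max_right _ _)
  -- Z lemmas
  have hZle : ∀ y, Zh π N Mr L y ≤ Mr * L := by
    intro y
    calc Zh π N Mr L y = ∑ z ∈ N y, clip Mr L (π z / π y) := rfl
      _ ≤ ∑ _z ∈ N y, L := Finset.sum_le_sum fun z _ => hclip_leL _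
      _ = ((N y).card : ℝ) * L := by rw [Finset.sum_const, nsmul_eq_mul]
      _ ≤ Mr * L := mul_le_mul_of_nonneg_right (hcard y) hL0.le
  have hZpos : ∀ y z, z ∈ N y → 0 < Zh π N Mr L y := by
    intro y z hz
    have h := Finset.single_le_sum (f := fun z => clip Mr L (π z / π y))
      (fun i _ => hclip_nn _ (div_nonneg (hπpos i).le (hπpos y).le)) hz
    calc (0:ℝ) < Mr := hMr0
      _ ≤ clip Mr L (π z / π y) := hclip_geM _
      _ ≤ Zh π N Mr L y := h
  have hZgeL : ∀ x, x ∈ X0 → x ≠ x0star → L ≤ Zh π N Mr L x := by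
    intro x hx hxne
    obtain ⟨y, hy, hLy⟩ := hup x hx hxne
    have hyN := (Finset.mem_inter.1 hy).1
    calc L = clip Mr L (π y / π x) := (hclip_eqL _ hLy).symm
      _ ≤ Zh π N Mr L x := Finset.single_le_sum
          (f := fun z => clip Mr L (π z / π x))
          (fun i _ => hclip_nn _ (div_nonneg (hπpos i).le (hπpos x).le)) hyN
  set W : X → Finset X := fun x => (N x ∩ X0).filter (fun y => Mr ≤ π y / π x) with hWdef
  set Z' : X → ℝ := fun x => ∑ z ∈ W x, clip Mr L (π z / π x) with hZ'def
  have hWmem : ∀ x y, y ∈ W x → y ∈ N x ∧ y ∈ X0 ∧ Mr ≤ π y / π x := by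
    intro x y hy
    rw [hWdef] at hy
    simp only [Finset.mem_filter, Finset.mem_inter] at hy
    tauto
  have hWsubN : ∀ x, W x ⊆ N x := by
    intro x y hy; exact (hWmem x y hy).1
  have hWsubX0 : ∀ x, W x ⊆ X0 := by
    intro x y hy; exact (hWmem x y hy).2.1
  have hZ'geL : ∀ x, x ∈ X0 → x ≠ x0star → L ≤ Z' x := by
    intro x hx hxne
    obtain ⟨y, hy, hLy⟩ := hup x hx hxne
    have hyW : y ∈ W x := by
      rw [hWdef]
      exact Finset.mem_filter.2 ⟨hy, le_trans hMrL hLy⟩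
    calc L = clip Mr L (π y / π x) := (hclip_eqL _ hLy).symm
      _ ≤ Z' x := Finset.single_le_sum
          (f := fun z => clip Mr L (π z / π x))
          (fun i _ => hclip_nn _ (div_nonneg (hπpos i).le (hπpos x).le)) hyW
  have hZ'pos : ∀ x, x ∈ X0 → x ≠ x0star → 0 < Z' x := fun x hx hxne =>
    lt_of_lt_of_le hL0 (hZ'geL x hx hxne)
  have hZZ' : ∀ x, x ∈ X0 → x ≠ x0star → Zh π N Mr L x ≤ 2 * Z' x := by
    intro x hx hxne
    have hsplit : ∑ z ∈ N x \ W x, clip Mr L (π z / π x) + ∑ z ∈ W x, clip Mr L (π z / π x)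
        = ∑ z ∈ N x, clip Mr L (π z / π x) := Finset.sum_sdiff (hWsubN x)
    have hper : ∀ z ∈ N x \ W x, clip Mr L (π z / π x) ≤ L / Mr := by
      intro z hz
      obtain ⟨hzN, hzW⟩ := Finset.mem_sdiff.1 hz
      by_cases hzX0 : z ∈ X0
      · have hnot : ¬ Mr ≤ π z / π x := fun hc => hzW (by
          rw [hWdef]
          exact Finset.mem_filter.2 ⟨Finset.mem_inter.2 ⟨hzN, hzX0⟩, hc⟩)
        have h' : π z / π x < Mr := not_le.1 hnot
        unfold clip
        rw [if_pos h', le_div_iff₀ hMr0]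
        nlinarith
      · have h' := hbd x hx z hzN hzX0
        calc clip Mr L (π z / π x) ≤ max Mr (π z / π x) := hclip_lemax _
          _ ≤ L / Mr := max_le (by rw [le_div_iff₀ hMr0]; nlinarith) h'.le
    have hrest : ∑ z ∈ N x \ W x, clip Mr L (π z / π x) ≤ L := by
      calc ∑ z ∈ N x \ W x, clip Mr L (π z / π x) ≤ (N x \ W x).card • (L / Mr) :=
            Finset.sum_le_card_nsmul _ _ _ hper
        _ = ((N x \ W x).card : ℝ) * (L / Mr) := nsmul_eq_mul _ _
        _ ≤ Mr * (L / Mr) := by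
            apply mul_le_mul_of_nonneg_right _ (by positivity)
            calc ((N x \ W x).card : ℝ) ≤ ((N x).card : ℝ) := by
                  exact_mod_cast Finset.card_le_card (Finset.sdiff_subset)
              _ ≤ Mr := hcard x
        _ = L := by field_simp
    have hZ'x := hZ'geL x hx hxne
    have hZeq : Zh π N Mr L x = ∑ z ∈ N x, clip Mr L (π z / π x) := rfl
    rw [hZeq, ← hsplit]
    have : Z' x = ∑ z ∈ W x, clip Mr L (π z / π x) := by rw [hZ'def]
    linarith [this ▸ hZ'x]
  -- capacity lower bound
  have hcap : ∀ x, x ∈ X0 → x ≠ x0star → ∀ y ∈ W x,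
      π x * (clip Mr L (π y / π x) / Zh π N Mr L x) ≤ π x * infMH π N Mr L x y := by
    intro x hxX0 hxne y hyW
    obtain ⟨hyN, hyX0, hyr⟩ := hWmem x y hyW
    have hyx : ¬ (y = x) := fun h => hNirr x (h ▸ hyN)
    have hxNy : x ∈ N y := hNsym x y hyN
    have hZxpos : 0 < Zh π N Mr L x := lt_of_lt_of_le hL0 (hZgeL x hxX0 hxne)
    have hZypos : 0 < Zh π N Mr L y := hZpos y x hxNy
    have hKxy : Kh π N Mr L x y = clip Mr L (π y / π x) / Zh π N Mr L x := by
      unfold Kh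
      rw [if_pos hyN]
    have hKyx : Kh π N Mr L y x = clip Mr L (π x / π y) / Zh π N Mr L y := by
      unfold Kh
      rw [if_pos hxNy]
    have hinf : infMH π N Mr L x y = Kh π N Mr L x y *
        min 1 ((π y * Kh π N Mr L y x) / (π x * Kh π N Mr L x y)) := by
      unfold infMH
      simp only [Matrix.of_apply]
      rw [if_neg hyx]
    set a := π x * Kh π N Mr L x y with ha
    set b := π y * Kh π N Mr L y x with hb
    have hapos : 0 < a := by
      rw [ha, hKxy]
      exact mul_pos (hπpos x) (div_pos (lt_of_lt_of_le hMr0 (hclip_geM _)) hZxpos)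
    have hab : a ≤ b := by
      rw [ha, hb, hKxy, hKyx]
      calc π x * (clip Mr L (π y / π x) / Zh π N Mr L x)
          = (π x * clip Mr L (π y / π x)) / Zh π N Mr L x := by ring
        _ ≤ π y / L := by
            apply div_le_div₀ (hπpos y).le _ hL0 (hZgeL x hxX0 hxne)
            calc π x * clip Mr L (π y / π x) ≤ π x * (π y / π x) :=
                  mul_le_mul_of_nonneg_left (hclip_leu _ hyr) (hπpos x).le
              _ = π y := by
                  have hx0 : π x ≠ 0 := (hπpos x).ne'
                  field_simp
        _ = π y * (1 / L) := by ring
        _ ≤ π y * (clip Mr L (π x / π y) / Zh π N Mr L y) := by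
            apply mul_le_mul_of_nonneg_left _ (hπpos y).le
            have h1L : (1:ℝ)/L = Mr / (Mr * L) := by field_simp
            rw [h1L]
            exact div_le_div₀ (lt_of_lt_of_le hMr0 (hclip_geM _)).le (hclip_geM _)
              hZypos (hZle y)
    rw [hinf]
    rcases le_or_gt 1 (b / a) with h | h
    · rw [min_eq_left h, mul_one, hKxy]
    · rw [min_eq_right h.le]
      have hba : π x * (Kh π N Mr L x y * (b / a)) = b := by
        rw [← mul_assoc, ← ha, ← mul_div_assoc, mul_div_cancel_left₀ _ hapos.ne']
      rw [hba]
      calc π x * (clip Mr L (π y / π x) / Zh π N Mr L x) = a := by rw [ha, hKxy]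
        _ ≤ b := hab
  -- nonnegativity of transition entries
  have hPnn : ∀ x y : X, ¬ (y = x) → 0 ≤ infMH π N Mr L x y := by
    intro x y hxy
    have hK : ∀ a b : X, 0 ≤ Kh π N Mr L a b := by
      intro a b
      unfold Kh
      apply div_nonneg
      · split_ifs with h
        · exact hclip_nn _ (div_nonneg (hπpos b).le (hπpos a).le)
        · exact le_rfl
      · exact Finset.sum_nonneg fun i _ => hclip_nn _ (div_nonneg (hπpos i).le (hπpos a).le)
    have : infMH π N Mr L x y = Kh π N Mr L x y *
        min 1 ((π y * Kh π N Mr L y x) / (π x * Kh π N Mr L x y)) := by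
      unfold infMH
      simp only [Matrix.of_apply]
      rw [if_neg hxy]
    rw [this]
    apply mul_nonneg (hK x y)
    exact le_min zero_le_one (div_nonneg (mul_nonneg (hπpos y).le (hK y x))
      (mul_nonneg (hπpos x).le (hK x y)))
  have hlazy : ∀ x y : X, ¬ (x = y) → lazyM (infMH π N Mr L) x y = infMH π N Mr L x y / 2 := by
    intro x y hxy
    simp only [lazyM, Matrix.smul_apply, Matrix.add_apply, Matrix.one_apply, smul_eq_mul]
    rw [if_neg hxy]
    ring
  -- rpow computation
  have hρpos : (0:ℝ) < L / Mr^2 := by positivity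
  have hrpow : (L / Mr^2) ^ (-(2:ℝ)⁻¹) = r := by
    rw [Real.rpow_neg hρpos.le, show ((2:ℝ)⁻¹) = ((1:ℝ)/2) by norm_num, ← Real.sqrt_eq_rpow]
    have h1 : L / Mr^2 = (s / Mr)^2 := by
      rw [div_pow, hsq]
    rw [h1, Real.sqrt_sq (by positivity), inv_div, hrdef]
  have hcr : cFun (L / Mr^2) = 4 / (1 - r)^3 := by
    rw [cFun, hrpow]
  have hcpos : 0 < cFun (L / Mr^2) := by
    rw [hcr]; positivity
  -- Jensen helper
  have hjensen : ∀ (t : Finset X) (p a : X → ℝ), (∀ y ∈ t, 0 ≤ p y) → (∑ y ∈ t, p y) = 1 →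
      (∑ y ∈ t, p y * a y)^2 ≤ ∑ y ∈ t, p y * (a y)^2 := by
    intro t p a hp hp1
    have key : ∀ y ∈ t, p y * a y = Real.sqrt (p y) * (Real.sqrt (p y) * a y) := by
      intro y hy
      rw [← mul_assoc, Real.mul_self_sqrt (hp y hy)]
    calc (∑ y ∈ t, p y * a y)^2
        = (∑ y ∈ t, Real.sqrt (p y) * (Real.sqrt (p y) * a y))^2 := by
          rw [Finset.sum_congr rfl key]
      _ ≤ (∑ y ∈ t, Real.sqrt (p y)^2) * ∑ y ∈ t, (Real.sqrt (p y) * a y)^2 :=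
          Finset.sum_mul_sq_le_sq_mul_sq t _ _
      _ = (∑ y ∈ t, p y) * ∑ y ∈ t, p y * (a y)^2 := by
          congr 1
          · exact Finset.sum_congr rfl fun y hy => Real.sq_sqrt (hp y hy)
          · exact Finset.sum_congr rfl fun y hy => by
              rw [mul_pow, Real.sq_sqrt (hp y hy)]
      _ = ∑ y ∈ t, p y * (a y)^2 := by rw [hp1, one_mul]
  -- main bound
  rw [restGap]
  apply le_csInf
  · refine ⟨_, (fun z => if z = x0star then (1:ℝ) else 0), ?_, rfl⟩
    apply Finset.sum_pos'
    · intro x _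
      exact Finset.sum_nonneg fun y _ =>
        mul_nonneg (mul_nonneg (sq_nonneg _) (hπpos x).le) (hπpos y).le
    · refine ⟨x0star, hx0star, Finset.sum_pos' (fun y _ =>
        mul_nonneg (mul_nonneg (sq_nonneg _) (hπpos x0star).le) (hπpos y).le)
        ⟨x₁, hx₁X0, ?_⟩⟩
      have h1 : (fun z => if z = x0star then (1:ℝ) else 0) x0star = 1 := by simp
      have h2 : (fun z => if z = x0star then (1:ℝ) else 0) x₁ = 0 := by simp [hx₁ne]
      rw [h1, h2]
      have := hπpos x0star
      have := hπpos x₁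
      nlinarith
  rintro ρv ⟨f, hDpos, rfl⟩
  rw [div_le_div_iff₀ (by positivity) hDpos]
  set g : X → ℝ := fun z => f z - f x0star with hg
  set V : ℝ := ∑ x ∈ X0, π x * g x ^ 2 with hV
  have hV0 : 0 ≤ V := Finset.sum_nonneg fun x _ => mul_nonneg (hπpos x).le (sq_nonneg _)
  set E : ℝ := ∑ x ∈ X0, ∑ y ∈ X0,
      (f x - f y)^2 * lazyM (infMH π N Mr L) x y * π x with hE
  have htermnn : ∀ x y : X, 0 ≤ (f x - f y)^2 * lazyM (infMH π N Mr L) x y * π x := by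
    intro x y
    by_cases hxy : x = y
    · subst hxy; simp
    · rw [hlazy x y hxy]
      have hP := hPnn x y (fun h => hxy (h.symm))
      have := hπpos x
      positivity
  have hEnn : 0 ≤ E := Finset.sum_nonneg fun x _ => Finset.sum_nonneg fun y _ => htermnn x y
  -- D ≤ 2V
  have hDle : (∑ x ∈ X0, ∑ y ∈ X0, (f x - f y)^2 * π x * π y) ≤ 2 * V := by
    set T := ∑ x ∈ X0, g x * π x with hT
    set P0 := ∑ x ∈ X0, π x with hP0
    have hP0le : P0 ≤ 1 := by
      rw [hP0, ← hπsum]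
      exact Finset.sum_le_sum_of_subset_of_nonneg (Finset.subset_univ X0)
        (fun i _ _ => (hπpos i).le)
    have hP0nn : 0 ≤ P0 := by
      rw [hP0]
      exact Finset.sum_nonneg fun i _ => (hπpos i).le
    have hexp : ∀ x ∈ X0, ∑ y ∈ X0, (f x - f y)^2 * π x * π y
        = (π x * g x^2) * P0 + π x * V - 2 * (g x * π x) * T := by
      intro x _
      have hterm : ∀ y ∈ X0, (f x - f y)^2 * π x * π y
          = (π x * g x^2) * π y + π x * (π y * g y^2) - (2 * (g x * π x)) * (g y * π y) := by
        intro y _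
        simp only [hg]
        ring
      have e0 : ∑ y ∈ X0, (f x - f y)^2 * π x * π y
          = (∑ y ∈ X0, (π x * g x^2) * π y) + (∑ y ∈ X0, π x * (π y * g y^2))
            - ∑ y ∈ X0, (2 * (g x * π x)) * (g y * π y) := by
        rw [← Finset.sum_add_distrib, ← Finset.sum_sub_distrib]
        exact Finset.sum_congr rfl hterm
      have s1 : (∑ y ∈ X0, (π x * g x^2) * π y) = (π x * g x^2) * P0 := by
        rw [hP0, Finset.mul_sum]
      have s2 : (∑ y ∈ X0, π x * (π y * g y^2)) = π x * V := by
        rw [hV, Finset.mul_sum]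
      have s3 : (∑ y ∈ X0, (2 * (g x * π x)) * (g y * π y)) = 2 * (g x * π x) * T := by
        rw [hT, Finset.mul_sum]
      rw [e0, s1, s2, s3]
    have o1 : (∑ x ∈ X0, ∑ y ∈ X0, (f x - f y)^2 * π x * π y)
        = V * P0 + P0 * V - 2 * (T * T) := by
      rw [Finset.sum_congr rfl hexp, Finset.sum_sub_distrib, Finset.sum_add_distrib]
      have t1 : (∑ x ∈ X0, (π x * g x^2) * P0) = V * P0 := by
        rw [hV, Finset.sum_mul]
      have t2 : (∑ x ∈ X0, π x * V) = P0 * V := by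
        rw [hP0, Finset.sum_mul]
      have t3 : (∑ x ∈ X0, 2 * (g x * π x) * T) = 2 * (T * T) := by
        rw [hT, Finset.sum_mul, Finset.mul_sum]
        apply Finset.sum_congr rfl
        intro x _
        ring
      rw [t1, t2, t3]
    rw [o1]
    nlinarith [sq_nonneg T, hV0, hP0le, hP0nn]
  -- definitions of A and B
  set A : ℝ := ∑ x ∈ X0.erase x0star, ∑ y ∈ W x,
      π x * (clip Mr L (π y / π x) / Z' x) * (f x - f y)^2 with hA
  set B : ℝ := ∑ x ∈ X0.erase x0star, ∑ y ∈ W x,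
      π x * (clip Mr L (π y / π x) / Z' x) * (g y)^2 with hB
  have hVsum : V = ∑ x ∈ X0.erase x0star, π x * g x^2 := by
    rw [hV, ← Finset.add_sum_erase X0 (fun x => π x * g x ^ 2) hx0star]
    have hgz : g x0star = 0 := by simp [hg]
    rw [hgz]
    ring
  have hZ'eq : ∀ x, Z' x = ∑ z ∈ W x, clip Mr L (π z / π x) := fun x => by rw [hZ'def]
  -- per-point inequality
  have hperx : ∀ x ∈ X0.erase x0star, π x * g x^2 ≤
      (1/(1-r)) * (∑ y ∈ W x, π x * (clip Mr L (π y / π x) / Z' x) * (f x - f y)^2)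
      + (1/r) * (∑ y ∈ W x, π x * (clip Mr L (π y / π x) / Z' x) * (g y)^2) := by
    intro x hx
    obtain ⟨hxne, hxX0⟩ := Finset.mem_erase.1 hx
    have hZ'p := hZ'pos x hxX0 hxne
    set p : X → ℝ := fun y => clip Mr L (π y / π x) / Z' x with hp
    have hpnn : ∀ y ∈ W x, 0 ≤ p y := fun y _ =>
      div_nonneg (hclip_nn _ (div_nonneg (hπpos y).le (hπpos x).le)) hZ'p.le
    have hp1 : ∑ y ∈ W x, p y = 1 := by
      rw [hp, ← Finset.sum_div, ← hZ'eq x]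
      exact div_self (ne_of_gt hZ'p)
    set u := ∑ y ∈ W x, p y * (f x - f y) with hu
    set v := ∑ y ∈ W x, p y * g y with hv
    have hguv : g x = u + v := by
      rw [hu, hv, ← Finset.sum_add_distrib]
      have hterm : ∀ y ∈ W x, p y * (f x - f y) + p y * g y = p y * g x := by
        intro y _
        simp only [hg]
        ring
      rw [Finset.sum_congr rfl hterm, ← Finset.sum_mul, hp1, one_mul]
    have hu2 : u^2 ≤ ∑ y ∈ W x, p y * (f x - f y)^2 := hjensen _ _ _ hpnn hp1
    have hv2 : v^2 ≤ ∑ y ∈ W x, p y * (g y)^2 := hjensen _ _ _ hpnn hp1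
    have hkey : r * (1-r) * (u+v)^2 ≤ r * u^2 + (1-r) * v^2 := by
      nlinarith [sq_nonneg (r*u - (1-r)*v)]
    have h2 : (u+v)^2 ≤ (1/(1-r)) * u^2 + (1/r) * v^2 := by
      have e1 : (1/(1-r)) * u^2 + (1/r) * v^2 = (r * u^2 + (1-r) * v^2) / (r * (1-r)) := by
        field_simp
      rw [e1, le_div_iff₀ (by positivity)]
      nlinarith [hkey]
    have hcs : g x^2 ≤ (1/(1-r)) * (∑ y ∈ W x, p y * (f x - f y)^2)
        + (1/r) * (∑ y ∈ W x, p y * (g y)^2) := by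
      calc g x^2 = (u+v)^2 := by rw [hguv]
        _ ≤ (1/(1-r)) * u^2 + (1/r) * v^2 := h2
        _ ≤ _ := by
            apply add_le_add
            · exact mul_le_mul_of_nonneg_left hu2 (by positivity)
            · exact mul_le_mul_of_nonneg_left hv2 (by positivity)
    calc π x * g x^2 ≤ π x * ((1/(1-r)) * (∑ y ∈ W x, p y * (f x - f y)^2)
          + (1/r) * (∑ y ∈ W x, p y * (g y)^2)) :=
        mul_le_mul_of_nonneg_left hcs (hπpos x).le
      _ = (1/(1-r)) * (∑ y ∈ W x, π x * p y * (f x - f y)^2)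
          + (1/r) * (∑ y ∈ W x, π x * p y * (g y)^2) := by
          rw [Finset.mul_sum, Finset.mul_sum, Finset.mul_sum, Finset.mul_sum, mul_add]
          congr 1
          · rw [Finset.mul_sum]
            apply Finset.sum_congr rfl
            intro y _
            ring
          · rw [Finset.mul_sum]
            apply Finset.sum_congr rfl
            intro y _
            ring
      _ = (1/(1-r)) * (∑ y ∈ W x, π x * (clip Mr L (π y / π x) / Z' x) * (f x - f y)^2)
          + (1/r) * (∑ y ∈ W x, π x * (clip Mr L (π y / π x) / Z' x) * (g y)^2) := by
          simp only [hp, mul_assoc]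
  have hVle : V ≤ (1/(1-r)) * A + (1/r) * B := by
    rw [hVsum, hA, hB, Finset.mul_sum, Finset.mul_sum, ← Finset.sum_add_distrib]
    exact Finset.sum_le_sum hperx
  -- B ≤ (Mr/L) V
  have hBle : B ≤ (Mr/L) * V := by
    have swap : ∀ x ∈ X0.erase x0star,
        (∑ y ∈ W x, π x * (clip Mr L (π y / π x) / Z' x) * (g y)^2)
        = ∑ y ∈ Finset.univ,
            (if y ∈ W x then π x * (clip Mr L (π y / π x) / Z' x) * (g y)^2 else 0) := by
      intro x _
      rw [Finset.sum_ite_mem, Finset.univ_inter]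
    have step1 : B = ∑ y ∈ Finset.univ, ∑ x ∈ X0.erase x0star,
        (if y ∈ W x then π x * (clip Mr L (π y / π x) / Z' x) * (g y)^2 else 0) := by
      rw [hB, Finset.sum_congr rfl swap, Finset.sum_comm]
    have step2 : ∀ y : X, (∑ x ∈ X0.erase x0star,
        if y ∈ W x then π x * (clip Mr L (π y / π x) / Z' x) * (g y)^2 else 0)
        ≤ (if y ∈ X0 then (Mr/L) * (π y * (g y)^2) else 0) := by
      intro y
      by_cases hyX0 : y ∈ X0
      case neg =>
        rw [if_neg hyX0]
        apply le_of_eq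
        apply Finset.sum_eq_zero
        intro x _
        rw [if_neg]
        intro hyW
        exact hyX0 (hWmem x y hyW).2.1
      case pos =>
        rw [if_pos hyX0]
        have perterm : ∀ x ∈ X0.erase x0star,
            (if y ∈ W x then π x * (clip Mr L (π y / π x) / Z' x) * (g y)^2 else 0)
            ≤ (if x ∈ N y then (π y / L) * (g y)^2 else 0) := by
          intro x hx
          by_cases hyW : y ∈ W x
          · rw [if_pos hyW]
            obtain ⟨hyN, hyX0', hyr⟩ := hWmem x y hyW
            rw [if_pos (hNsym x y hyN)]
            obtain ⟨hxne, hxX0⟩ := Finset.mem_erase.1 hx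
            have h1 : π x * (clip Mr L (π y / π x) / Z' x) ≤ π y / L := by
              rw [← mul_div_assoc]
              apply div_le_div₀ (hπpos y).le _ hL0 (hZ'geL x hxX0 hxne)
              calc π x * clip Mr L (π y / π x) ≤ π x * (π y / π x) :=
                    mul_le_mul_of_nonneg_left (hclip_leu _ hyr) (hπpos x).le
                _ = π y := by
                    have hx0 : π x ≠ 0 := (hπpos x).ne'
                    field_simp
            exact mul_le_mul_of_nonneg_right h1 (sq_nonneg _)
          · rw [if_neg hyW]
            split_ifs
            · have := hπpos y
              positivity
            · exact le_rfl
        calc (∑ x ∈ X0.erase x0star,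
              if y ∈ W x then π x * (clip Mr L (π y / π x) / Z' x) * (g y)^2 else 0)
            ≤ ∑ x ∈ X0.erase x0star, (if x ∈ N y then (π y / L) * (g y)^2 else 0) :=
              Finset.sum_le_sum perterm
          _ ≤ ∑ x ∈ Finset.univ, (if x ∈ N y then (π y / L) * (g y)^2 else 0) :=
              Finset.sum_le_sum_of_subset_of_nonneg (Finset.subset_univ _)
                (fun i _ _ => by
                  split_ifs
                  · have := hπpos y
                    positivity
                  · exact le_rfl)
          _ = ∑ x ∈ N y, (π y / L) * (g y)^2 := by
              rw [Finset.sum_ite_mem, Finset.univ_inter]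
          _ = ((N y).card : ℝ) * ((π y / L) * (g y)^2) := by
              rw [Finset.sum_const, nsmul_eq_mul]
          _ ≤ Mr * ((π y / L) * (g y)^2) := by
              apply mul_le_mul_of_nonneg_right (hcard y)
              have := hπpos y
              positivity
          _ = (Mr/L) * (π y * (g y)^2) := by ring
    calc B = ∑ y ∈ Finset.univ, ∑ x ∈ X0.erase x0star,
          (if y ∈ W x then π x * (clip Mr L (π y / π x) / Z' x) * (g y)^2 else 0) := step1
      _ ≤ ∑ y ∈ Finset.univ, (if y ∈ X0 then (Mr/L) * (π y * (g y)^2) else 0) :=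
          Finset.sum_le_sum fun y _ => step2 y
      _ = ∑ y ∈ X0, (Mr/L) * (π y * (g y)^2) := by
          rw [Finset.sum_ite_mem, Finset.univ_inter]
      _ = (Mr/L) * V := by
          rw [hV, ← Finset.mul_sum]
  -- V ≤ A/(1-r)^2
  have hV2 : V ≤ A / (1-r)^2 := by
    have hstep : (1/r) * ((Mr/L) * V) = (1/s) * V := by
      rw [hrdef, ← hsq]
      field_simp
    have h6 : V ≤ (1/(1-r)) * A + (1/s) * V := by
      calc V ≤ (1/(1-r)) * A + (1/r) * B := hVle
        _ ≤ (1/(1-r)) * A + (1/r) * ((Mr/L) * V) := by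
            have := mul_le_mul_of_nonneg_left hBle (le_of_lt (by positivity : (0:ℝ) < 1/r))
            linarith
        _ = (1/(1-r)) * A + (1/s) * V := by rw [hstep]
    have e1 : V * (1/s) ≤ V * r := mul_le_mul_of_nonneg_left hrs hV0
    have h7 : V * (1-r) ≤ A * (1/(1-r)) := by nlinarith [h6, e1]
    rw [le_div_iff₀ (by positivity)]
    calc V * (1-r)^2 = (V * (1-r)) * (1-r) := by ring
      _ ≤ (A * (1/(1-r))) * (1-r) := mul_le_mul_of_nonneg_right h7 h1r.le
      _ = A := by field_simp
  -- A ≤ 4E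
  have hAE : A ≤ 4 * E := by
    have hterm : ∀ x ∈ X0.erase x0star, ∀ y ∈ W x,
        π x * (clip Mr L (π y / π x) / Z' x) * (f x - f y)^2
        ≤ 4 * ((f x - f y)^2 * lazyM (infMH π N Mr L) x y * π x) := by
      intro x hx y hy
      obtain ⟨hxne, hxX0⟩ := Finset.mem_erase.1 hx
      obtain ⟨hyN, hyX0, hyr⟩ := hWmem x y hy
      have hyx : ¬ (x = y) := fun h => hNirr y (h ▸ hyN)
      rw [hlazy x y hyx]
      have hZZ := hZZ' x hxX0 hxne
      have hZ'p := hZ'pos x hxX0 hxne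
      have hZp : 0 < Zh π N Mr L x := lt_of_lt_of_le hL0 (hZgeL x hxX0 hxne)
      have hclipnn : 0 ≤ clip Mr L (π y / π x) :=
        hclip_nn _ (div_nonneg (hπpos y).le (hπpos x).le)
      have i0 : clip Mr L (π y / π x) / Z' x
          ≤ 2 * (clip Mr L (π y / π x) / Zh π N Mr L x) := by
        rw [show 2 * (clip Mr L (π y / π x) / Zh π N Mr L x)
            = (2 * clip Mr L (π y / π x)) / Zh π N Mr L x by ring,
          div_le_div_iff₀ hZ'p hZp]
        nlinarith [hZZ, hclipnn]
      have i1 : π x * (clip Mr L (π y / π x) / Z' x)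
          ≤ 2 * (π x * (clip Mr L (π y / π x) / Zh π N Mr L x)) := by
        have := mul_le_mul_of_nonneg_left i0 (hπpos x).le
        linarith
      have i2 := hcap x hxX0 hxne y hy
      have i3 : π x * (clip Mr L (π y / π x) / Z' x) ≤ 2 * (π x * infMH π N Mr L x y) := by
        linarith
      calc π x * (clip Mr L (π y / π x) / Z' x) * (f x - f y)^2
          ≤ (2 * (π x * infMH π N Mr L x y)) * (f x - f y)^2 :=
            mul_le_mul_of_nonneg_right i3 (sq_nonneg _)
        _ = 4 * ((f x - f y)^2 * (infMH π N Mr L x y / 2) * π x) := by ring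
    have hsub : A ≤ 4 * ∑ x ∈ X0.erase x0star, ∑ y ∈ W x,
        (f x - f y)^2 * lazyM (infMH π N Mr L) x y * π x := by
      rw [hA, Finset.mul_sum]
      apply Finset.sum_le_sum
      intro x hx
      rw [Finset.mul_sum]
      exact Finset.sum_le_sum (hterm x hx)
    have hext : (∑ x ∈ X0.erase x0star, ∑ y ∈ W x,
        (f x - f y)^2 * lazyM (infMH π N Mr L) x y * π x) ≤ E := by
      rw [hE]
      calc (∑ x ∈ X0.erase x0star, ∑ y ∈ W x,
            (f x - f y)^2 * lazyM (infMH π N Mr L) x y * π x)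
          ≤ ∑ x ∈ X0.erase x0star, ∑ y ∈ X0,
            (f x - f y)^2 * lazyM (infMH π N Mr L) x y * π x :=
            Finset.sum_le_sum fun x _ =>
              Finset.sum_le_sum_of_subset_of_nonneg (hWsubX0 x) (fun y _ _ => htermnn x y)
        _ ≤ ∑ x ∈ X0, ∑ y ∈ X0, (f x - f y)^2 * lazyM (infMH π N Mr L) x y * π x :=
            Finset.sum_le_sum_of_subset_of_nonneg (Finset.erase_subset _ _)
              (fun x _ _ => Finset.sum_nonneg fun y _ => htermnn x y)
    linarith [mul_le_mul_of_nonneg_left hext (by norm_num : (0:ℝ) ≤ 4)]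
  -- final assembly
  have hk4 : A / (1-r)^2 ≤ (4 * E) / (1-r)^2 := by
    exact (div_le_div_iff_of_pos_right (by positivity)).2 hAE
  have hk5 : (4 * E) / (1-r)^2 ≤ (4 * E) / (1-r)^3 := by
    apply div_le_div_of_nonneg_left (by linarith) (by positivity)
    exact pow_le_pow_of_le_one h1r.le (by linarith) (by norm_num)
  calc 1 * (∑ x ∈ X0, ∑ y ∈ X0, (f x - f y)^2 * π x * π y)
      ≤ 2 * V := by linarith [hDle]
    _ ≤ 2 * (A / (1-r)^2) := by linarith [hV2]
    _ ≤ 2 * ((4 * E) / (1-r)^2) := by linarith [hk4]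
    _ ≤ 2 * ((4 * E) / (1-r)^3) := by linarith [hk5]
    _ = E * (2 * cFun (L / Mr^2)) := by rw [hcr]; ring
end
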